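/- Fix a real number p. The sequence c_l := (√((l+1)(l+2)(l+3)(l+4))/4)·[2((2l+5)/(2l+1))^{2p} − 1 − ((2l+9)/(2l+1))^{2p}], l ∈ ℤ_{≥0}, is bounded. -/

import Mathlib

/-!
With `h = 4 / (2l + 1)` the two ratios are `1 + h` and `1 + 2h`, so the bracket is minus the
second difference of `x ↦ x ^ (2p)` with step `h` at `1`. All points lie in `[1, 9]`, where
this function has bounded second derivative, so the bracket is `O(h²) = O(l⁻²)`, while the
square root is at most `(l + 4)²`.
-/

open Set

lemma rpow_le_rpow_abs_of_mem_Icc {b x s : ℝ} (hx : x ∈ Icc 1 b) : x ^ s ≤ b ^ |s| :=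
  calc x ^ s ≤ x ^ |s| := Real.rpow_le_rpow_of_exponent_le hx.1 (le_abs_self s)
    _ ≤ b ^ |s| := Real.rpow_le_rpow (by linarith [hx.1]) hx.2 (abs_nonneg s)

lemma abs_rpow_sub_rpow_le {b r x y : ℝ} (hx : x ∈ Icc 1 b) (hy : y ∈ Icc 1 b) :
    |x ^ r - y ^ r| ≤ |r| * b ^ |r - 1| * |x - y| := by
  have hderiv : ∀ z ∈ Icc 1 b, HasDerivWithinAt (· ^ r) (r * z ^ (r - 1)) (Icc 1 b) z :=
    fun z hz => (Real.hasDerivAt_rpow_const (Or.inl (by linarith [hz.1]))).hasDerivWithinAt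
  have hbound : ∀ z ∈ Icc 1 b, ‖r * z ^ (r - 1)‖ ≤ |r| * b ^ |r - 1| := by
    intro z hz
    rw [Real.norm_eq_abs, abs_mul, abs_of_nonneg (Real.rpow_nonneg (by linarith [hz.1]) _)]
    exact mul_le_mul_of_nonneg_left (rpow_le_rpow_abs_of_mem_Icc hz) (abs_nonneg r)
  exact (convex_Icc 1 b).norm_image_sub_le_of_norm_hasDerivWithin_le hderiv hbound hy hx

/-- The mean value theorem applied to `t ↦ f (t + h) - f t` on `[a, a + h]`. -/
lemma abs_second_diff_le {f f' : ℝ → ℝ} {a h K : ℝ} (hh : 0 ≤ h)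
    (hf : ∀ x ∈ Icc a (a + 2 * h), HasDerivAt f (f' x) x)
    (hf' : ∀ x ∈ Icc a (a + 2 * h), ∀ y ∈ Icc a (a + 2 * h), |f' x - f' y| ≤ K * |x - y|) :
    |f (a + 2 * h) - 2 * f (a + h) + f a| ≤ K * h ^ 2 := by
  have hshift : ∀ t ∈ Icc a (a + h),
      t + h ∈ Icc a (a + 2 * h) ∧ t ∈ Icc a (a + 2 * h) :=
    fun t ht => ⟨⟨by linarith [ht.1], by linarith [ht.2]⟩, ⟨ht.1, by linarith [ht.2]⟩⟩
  have hderiv : ∀ t ∈ Icc a (a + h),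
      HasDerivWithinAt (fun t => f (t + h) - f t) (f' (t + h) - f' t) (Icc a (a + h)) t :=
    fun t ht => (((hf _ (hshift t ht).1).comp_add_const t h).sub
      (hf t (hshift t ht).2)).hasDerivWithinAt
  have hbound : ∀ t ∈ Icc a (a + h), ‖f' (t + h) - f' t‖ ≤ K * h := by
    intro t ht
    simpa [abs_of_nonneg hh] using hf' _ (hshift t ht).1 t (hshift t ht).2
  have key := (convex_Icc a (a + h)).norm_image_sub_le_of_norm_hasDerivWithin_le hderiv hbound
    (left_mem_Icc.mpr (by linarith)) (right_mem_Icc.mpr (by linarith))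
  rw [Real.norm_eq_abs, Real.norm_eq_abs, add_sub_cancel_left, abs_of_nonneg hh,
    add_assoc, ← two_mul] at key
  calc |f (a + 2 * h) - 2 * f (a + h) + f a|
      = |f (a + 2 * h) - f (a + h) - (f (a + h) - f a)| := by congr 1; ring
    _ ≤ K * h * h := key
    _ = K * h ^ 2 := by ring

lemma abs_two_mul_one_add_rpow_sub_le {b q h : ℝ} (hh : 0 ≤ h) (hb : 1 + 2 * h ≤ b) :
    |2 * (1 + h) ^ q - 1 - (1 + 2 * h) ^ q| ≤ |q| * |q - 1| * b ^ |q - 2| * h ^ 2 := by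
  have hsub : Icc 1 (1 + 2 * h) ⊆ Icc 1 b := Icc_subset_Icc_right hb
  have hderiv : ∀ x ∈ Icc 1 (1 + 2 * h), HasDerivAt (· ^ q) (q * x ^ (q - 1)) x :=
    fun x hx => Real.hasDerivAt_rpow_const (Or.inl (by linarith [hx.1]))
  have hlip : ∀ x ∈ Icc 1 (1 + 2 * h), ∀ y ∈ Icc 1 (1 + 2 * h),
      |q * x ^ (q - 1) - q * y ^ (q - 1)| ≤ |q| * |q - 1| * b ^ |q - 2| * |x - y| := by
    intro x hx y hy
    have := abs_rpow_sub_rpow_le (r := q - 1) (hsub hx) (hsub hy)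
    rw [sub_sub, one_add_one_eq_two] at this
    rw [← mul_sub, abs_mul]
    simpa only [mul_assoc] using mul_le_mul_of_nonneg_left this (abs_nonneg q)
  have := abs_second_diff_le hh hderiv hlip
  rw [Real.one_rpow] at this
  rw [← abs_neg]
  convert this using 2
  ring

theorem c_seq_bounded (p : ℝ) :
    ∃ C : ℝ, ∀ l : ℕ,
      |Real.sqrt (((l : ℝ) + 1) * (l + 2) * (l + 3) * (l + 4)) / 4 *
          (2 * ((2 * (l : ℝ) + 5) / (2 * l + 1)) ^ (2 * p) - 1
            - ((2 * (l : ℝ) + 9) / (2 * l + 1)) ^ (2 * p))| ≤ C := by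
  set K := |2 * p| * |2 * p - 1| * 9 ^ |2 * p - 2|
  refine ⟨64 * K, fun l => ?_⟩
  set n : ℝ := (l : ℝ)
  have hn : 0 ≤ n := Nat.cast_nonneg l
  set h := 4 / (2 * n + 1)
  have hh : 0 ≤ h := by positivity
  have hh4 : h ≤ 4 := by rw [div_le_iff₀ (by linarith)]; nlinarith
  have hnh : (n + 4) * h ≤ 16 := by rw [mul_div_assoc', div_le_iff₀ (by linarith)]; nlinarith
  have hratio₁ : (2 * n + 5) / (2 * n + 1) = 1 + h := by simp only [h]; field_simp; ring
  have hratio₂ : (2 * n + 9) / (2 * n + 1) = 1 + 2 * h := by simp only [h]; field_simp; ring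
  have hsqrt : √((n + 1) * (n + 2) * (n + 3) * (n + 4)) ≤ (n + 4) ^ 2 :=
    Real.sqrt_le_iff.mpr ⟨by positivity, by nlinarith⟩
  have hdiff := abs_two_mul_one_add_rpow_sub_le (q := 2 * p) hh (by linarith : 1 + 2 * h ≤ 9)
  rw [hratio₁, hratio₂, abs_mul, abs_of_nonneg (by positivity : 0 ≤ √_ / 4)]
  calc _ ≤ (n + 4) ^ 2 / 4 * (K * h ^ 2) := by gcongr
    _ = K * ((n + 4) * h) ^ 2 / 4 := by ring
    _ ≤ K * 16 ^ 2 / 4 := by gcongr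
    _ = 64 * K := by norm_num; ring
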